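/- A probability measure P on path space is reciprocal if and only if it is a Markov field in time: for all 0 ≤ s ≤ u ≤ 1 and all events B ∈ 𝒜_{[s,u]}, P(B | 𝒜_{[0,s]} ∨ 𝒜_{[u,1]}) = P(B | X_s, X_u), P-a.s. -/

import Mathlib

/-!
Write `𝒢 = 𝒜_{[0,s]} ∨ 𝒜_{[u,1]}` and `ℱ = σ(X_s, X_u) ≤ 𝒢`. For integrable `f`, the identity
`E[f | 𝒢] = E[f | ℱ]` is equivalent to the factorisation `E[1_G f | ℱ] = E[1_G | ℱ] E[f | ℱ]`
for `G` in a π-system generating `𝒢`. The identity gives the factorisation by the tower property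
and by pulling the `𝒢`-measurable `1_G` out of `E[1_G f | 𝒢]`. Conversely, the factorisation says
that `E[f | ℱ]` and `f` have the same integral over each such `G`, and Dynkin's π-λ theorem
extends this to all of `𝒢`. The rectangles `A ∩ C` with `A ∈ 𝒜_{[0,s]}`, `C ∈ 𝒜_{[u,1]}` form
such a π-system, and for them the factorisation with `f = 1_B` is the reciprocal property.
-/

open MeasureTheory

noncomputable section

variable {Ω 𝒳 : Type*}

/-- σ-algebra generated by the canonical process on the time window `[s,u]`. -/
def window [MeasurableSpace 𝒳] (X : ℝ → Ω → 𝒳) (s u : ℝ) : MeasurableSpace Ω :=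
  ⨆ r ∈ Set.Icc s u, MeasurableSpace.comap (X r) inferInstance

/-- σ-algebra generated by the position at time `t`. -/
def at1 [MeasurableSpace 𝒳] (X : ℝ → Ω → 𝒳) (t : ℝ) : MeasurableSpace Ω :=
  MeasurableSpace.comap (X t) inferInstance

/-- σ-algebra generated by the pair of positions at times `s` and `u`. -/
def at2 [MeasurableSpace 𝒳] (X : ℝ → Ω → 𝒳) (s u : ℝ) : MeasurableSpace Ω :=
  MeasurableSpace.comap (fun ω => (X s ω, X u ω)) inferInstance

/-- Indicator function of an event, real-valued. -/
def ind (A : Set Ω) : Ω → ℝ := A.indicator (fun _ => 1)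

/-- The two-sided (symmetric) Markov property: for every time `t ∈ [0,1]`, past and future
events are conditionally independent given the present position `X t`. -/
def IsMarkov [MeasurableSpace Ω] [MeasurableSpace 𝒳]
    (X : ℝ → Ω → 𝒳) (P : Measure Ω) : Prop :=
  ∀ t ∈ Set.Icc (0:ℝ) 1, ∀ A B : Set Ω,
    MeasurableSet[window X 0 t] A → MeasurableSet[window X t 1] B →
    P[ind (A ∩ B) | at1 X t] =ᵐ[P] P[ind A | at1 X t] * P[ind B | at1 X t]

/-- The reciprocal property: for all `0 ≤ s ≤ u ≤ 1`, the events inside `[s,u]` and those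
outside are conditionally independent given the pair `(X s, X u)`. -/
def IsReciprocal [MeasurableSpace Ω] [MeasurableSpace 𝒳]
    (X : ℝ → Ω → 𝒳) (P : Measure Ω) : Prop :=
  ∀ s u : ℝ, 0 ≤ s → s ≤ u → u ≤ 1 → ∀ A B C : Set Ω,
    MeasurableSet[window X 0 s] A → MeasurableSet[window X s u] B →
    MeasurableSet[window X u 1] C →
    P[ind (A ∩ B ∩ C) | at2 X s u] =ᵐ[P]
      P[ind (A ∩ C) | at2 X s u] * P[ind B | at2 X s u]

theorem mul_ind (g : Ω → ℝ) (s : Set Ω) : g * ind s = s.indicator g := by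
  ext ω
  by_cases hω : ω ∈ s <;> simp [ind, hω]

theorem indicator_ind (s t : Set Ω) : s.indicator (ind t) = ind (s ∩ t) := by
  simp only [ind, Set.indicator_indicator]

theorem integrable_ind {mΩ : MeasurableSpace Ω} {μ : Measure Ω} [IsFiniteMeasure μ]
    {s : Set Ω} (hs : MeasurableSet s) : Integrable (ind s) μ :=
  (integrable_const 1).indicator hs

namespace MeasurableSpace

theorem isPiSystem_image2_inter (m₁ m₂ : MeasurableSpace Ω) :
    IsPiSystem (Set.image2 (· ∩ ·) {s | MeasurableSet[m₁] s} {t | MeasurableSet[m₂] t}) := by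
  rintro _ ⟨s₁, hs₁, t₁, ht₁, rfl⟩ _ ⟨s₂, hs₂, t₂, ht₂, rfl⟩ -
  exact ⟨s₁ ∩ s₂, hs₁.inter hs₂, t₁ ∩ t₂, ht₁.inter ht₂, Set.inter_inter_inter_comm ..⟩

theorem sup_eq_generateFrom_image2_inter (m₁ m₂ : MeasurableSpace Ω) :
    m₁ ⊔ m₂ =
      generateFrom (Set.image2 (· ∩ ·) {s | MeasurableSet[m₁] s} {t | MeasurableSet[m₂] t}) := by
  refine le_antisymm (sup_le (fun s hs => ?_) (fun t ht => ?_)) (generateFrom_le ?_)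
  · exact measurableSet_generateFrom ⟨s, hs, Set.univ, .univ, Set.inter_univ s⟩
  · exact measurableSet_generateFrom ⟨Set.univ, .univ, t, ht, Set.univ_inter t⟩
  · rintro _ ⟨s, hs, t, ht, rfl⟩
    exact (le_sup_left (b := m₂) _ hs).inter (le_sup_right (a := m₁) _ ht)

end MeasurableSpace

namespace MeasureTheory

theorem setIntegral_eq_setIntegral_of_isPiSystem {E : Type*} [NormedAddCommGroup E]
    [NormedSpace ℝ E] {mΩ : MeasurableSpace Ω} {μ : Measure Ω} {m : MeasurableSpace Ω}
    (hm : m ≤ mΩ)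
    {S : Set (Set Ω)} (h_eq : m = MeasurableSpace.generateFrom S) (h_inter : IsPiSystem S)
    {f g : Ω → E} (hf : Integrable f μ) (hg : Integrable g μ)
    (basic : ∀ t ∈ S, ∫ x in t, f x ∂μ = ∫ x in t, g x ∂μ)
    (h_univ : ∫ x, f x ∂μ = ∫ x, g x ∂μ) {t : Set Ω} (ht : MeasurableSet[m] t) :
    ∫ x in t, f x ∂μ = ∫ x in t, g x ∂μ := by
  induction t, ht using MeasurableSpace.induction_on_inter h_eq h_inter with
  | empty => simp
  | basic t ht => exact basic t ht
  | compl t ht h =>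
    rw [setIntegral_compl (hm _ ht) hf, setIntegral_compl (hm _ ht) hg, h, h_univ]
  | iUnion t hdisj ht h =>
    rw [integral_iUnion (fun i => hm _ (ht i)) hdisj hf.integrableOn,
      integral_iUnion (fun i => hm _ (ht i)) hdisj hg.integrableOn]
    exact tsum_congr h

variable {mΩ : MeasurableSpace Ω} {μ : Measure Ω} [IsFiniteMeasure μ]
  {ℱ 𝒢 : MeasurableSpace Ω} {f : Ω → ℝ}

theorem condExp_indicator_eq_mul_of_condExp_eq (hℱ𝒢 : ℱ ≤ 𝒢) (h𝒢 : 𝒢 ≤ mΩ)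
    (hf : Integrable f μ) (h : μ[f | 𝒢] =ᵐ[μ] μ[f | ℱ]) {G : Set Ω} (hG : MeasurableSet[𝒢] G) :
    μ[G.indicator f | ℱ] =ᵐ[μ] μ[ind G | ℱ] * μ[f | ℱ] := by
  have hGm : MeasurableSet[mΩ] G := h𝒢 _ hG
  have hint : Integrable (μ[f | ℱ] * ind G) μ := by
    rw [mul_ind]
    exact integrable_condExp.indicator hGm
  calc μ[G.indicator f | ℱ]
      =ᵐ[μ] μ[μ[G.indicator f | 𝒢] | ℱ] := (condExp_condExp_of_le hℱ𝒢 h𝒢).symm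
    _ =ᵐ[μ] μ[G.indicator (μ[f | 𝒢]) | ℱ] := condExp_congr_ae (condExp_indicator hf hG)
    _ =ᵐ[μ] μ[μ[f | ℱ] * ind G | ℱ] := by
      rw [mul_ind]
      exact condExp_congr_ae (h.mono fun ω hω => by simp only [Set.indicator, hω])
    _ =ᵐ[μ] μ[f | ℱ] * μ[ind G | ℱ] :=
      condExp_mul_of_stronglyMeasurable_left stronglyMeasurable_condExp hint
        (integrable_ind hGm)
    _ = μ[ind G | ℱ] * μ[f | ℱ] := mul_comm _ _

theorem condExp_eq_of_condExp_indicator_eq_mul (hℱ𝒢 : ℱ ≤ 𝒢) (h𝒢 : 𝒢 ≤ mΩ)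
    {S : Set (Set Ω)} (h_eq : 𝒢 = MeasurableSpace.generateFrom S) (h_inter : IsPiSystem S)
    (hf : Integrable f μ) (h : ∀ G ∈ S, μ[G.indicator f | ℱ] =ᵐ[μ] μ[ind G | ℱ] * μ[f | ℱ]) :
    μ[f | 𝒢] =ᵐ[μ] μ[f | ℱ] := by
  have hℱ : ℱ ≤ mΩ := hℱ𝒢.trans h𝒢
  refine (ae_eq_condExp_of_forall_setIntegral_eq h𝒢 hf
    (fun _ _ _ => integrable_condExp.integrableOn) (fun G hG _ => ?_)
    (stronglyMeasurable_condExp.mono hℱ𝒢).aestronglyMeasurable).symm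
  refine setIntegral_eq_setIntegral_of_isPiSystem h𝒢 h_eq h_inter integrable_condExp hf
    (fun G hGS => ?_) (integral_condExp hℱ) hG
  have hGm : MeasurableSet[mΩ] G := h𝒢 _ (h_eq ▸ MeasurableSpace.measurableSet_generateFrom hGS)
  have hint : Integrable (μ[f | ℱ] * ind G) μ := by
    rw [mul_ind]
    exact integrable_condExp.indicator hGm
  calc ∫ x in G, μ[f | ℱ] x ∂μ
      = ∫ x, μ[μ[f | ℱ] * ind G | ℱ] x ∂μ := by
        rw [integral_condExp hℱ, mul_ind, integral_indicator hGm]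
    _ = ∫ x, (μ[ind G | ℱ] * μ[f | ℱ]) x ∂μ := by
        rw [mul_comm (μ[ind G | ℱ])]
        exact integral_congr_ae (condExp_mul_of_stronglyMeasurable_left
          stronglyMeasurable_condExp hint (integrable_ind hGm))
    _ = ∫ x in G, f x ∂μ := by
        rw [← integral_congr_ae (h G hGS), integral_condExp hℱ, integral_indicator hGm]

end MeasureTheory

section Window

variable [MeasurableSpace 𝒳] (X : ℝ → Ω → 𝒳)

theorem window_le [mΩ : MeasurableSpace Ω] (hX : ∀ t, Measurable (X t)) (s u : ℝ) :
    window X s u ≤ mΩ :=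
  iSup₂_le fun r _ => (hX r).comap_le

theorem at1_le_window {s u r : ℝ} (hr : r ∈ Set.Icc s u) : at1 X r ≤ window X s u :=
  le_iSup₂ (f := fun r _ => MeasurableSpace.comap (X r) inferInstance) r hr

theorem at2_eq_sup (s u : ℝ) : at2 X s u = at1 X s ⊔ at1 X u :=
  MeasurableSpace.comap_prodMk (X s) (X u)

theorem at2_le_window_sup_window {a s u b : ℝ} (has : a ≤ s) (hub : u ≤ b) :
    at2 X s u ≤ window X a s ⊔ window X u b := by
  rw [at2_eq_sup]
  exact sup_le_sup (at1_le_window X ⟨has, le_rfl⟩) (at1_le_window X ⟨le_rfl, hub⟩)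

end Window

/-- a probability measure is reciprocal if and only if it is a Markov field in
time: conditioning inside events on all the outside data reduces to conditioning on the
boundary pair `(X_s, X_u)`. -/
theorem reciprocal_iff_markov_field
    [MeasurableSpace Ω] [MeasurableSpace 𝒳]
    (X : ℝ → Ω → 𝒳) (hX : ∀ t, Measurable (X t))
    (P : Measure Ω) [IsProbabilityMeasure P] :
    IsReciprocal X P ↔
      ∀ s u : ℝ, 0 ≤ s → s ≤ u → u ≤ 1 → ∀ B : Set Ω, MeasurableSet[window X s u] B →
        P[ind B | window X 0 s ⊔ window X u 1] =ᵐ[P] P[ind B | at2 X s u] := by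
  have h_outside (s u : ℝ) : window X 0 s ⊔ window X u 1 ≤ ‹MeasurableSpace Ω› :=
    sup_le (window_le X hX 0 s) (window_le X hX u 1)
  have h_inner_integrable {s u : ℝ} {B : Set Ω} (hB : MeasurableSet[window X s u] B) :
      Integrable (ind B) P :=
    integrable_ind (window_le X hX s u _ hB)
  constructor
  · intro hrec s u h0 hsu h1 B hB
    refine condExp_eq_of_condExp_indicator_eq_mul (at2_le_window_sup_window X h0 h1)
      (h_outside s u) (MeasurableSpace.sup_eq_generateFrom_image2_inter _ _)
      (MeasurableSpace.isPiSystem_image2_inter _ _) (h_inner_integrable hB) ?_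
    rintro _ ⟨A, hA, C, hC, rfl⟩
    rw [indicator_ind, ← Set.inter_right_comm]
    exact hrec s u h0 hsu h1 A B C hA hB hC
  · intro hmf s u h0 hsu h1 A B C hA hB hC
    rw [Set.inter_right_comm, ← indicator_ind]
    exact condExp_indicator_eq_mul_of_condExp_eq (at2_le_window_sup_window X h0 h1)
      (h_outside s u) (h_inner_integrable hB) (hmf s u h0 hsu h1 B hB)
      ((le_sup_left (b := window X u 1) _ hA).inter (le_sup_right (a := window X 0 s) _ hC))
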